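/- arXiv:1507.05995 — 2 statements merged into one kernel-verified Lean document; each statement's English description precedes it below -/
import Mathlib

section
/- Among all nonnegative solutions of the Sudoku linear system Ax = b, every binary solution minimizes ‖x‖₀, with minimum value 81. -/
/-- Grid coordinate of offset `s` inside box row/column `p`. -/
def boxIdx (p s : Fin 3) : Fin 9 :=
  ⟨3 * p.val + s.val, by have := p.isLt; have := s.isLt; omega⟩

/-- A vector indexed by cell `(i,j)` and digit `k` is binary (0/1-valued). -/
def Binary (x : Fin 9 → Fin 9 → Fin 9 → ℝ) : Prop :=
  ∀ i j k, x i j k = 0 ∨ x i j k = 1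

/-- The full Sudoku linear system `Ax = b`: row, column, box, cell and clue
constraints, all right-hand sides equal to 1. -/
def SudokuSat (clues : Fin 9 → Fin 9 → Fin 9 → Prop)
    (x : Fin 9 → Fin 9 → Fin 9 → ℝ) : Prop :=
  (∀ i k, ∑ j, x i j k = 1) ∧
  (∀ j k, ∑ i, x i j k = 1) ∧
  (∀ p q k, ∑ s : Fin 3, ∑ t : Fin 3, x (boxIdx p s) (boxIdx q t) k = 1) ∧
  (∀ i j, ∑ k, x i j k = 1) ∧
  (∀ i j d, clues i j d → x i j d = 1)

/-- A valid Sudoku solution: every row, column and 3×3 box contains each digit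
exactly once. -/
def ValidSolution (S : Fin 9 → Fin 9 → Fin 9) : Prop :=
  (∀ i, Function.Bijective (S i)) ∧
  (∀ j, Function.Bijective (fun i => S i j)) ∧
  (∀ p q, Function.Injective
    (fun st : Fin 3 × Fin 3 => S (boxIdx p st.1) (boxIdx q st.2)))

/-- The solution `S` agrees with the given clues. -/
def Respects (clues : Fin 9 → Fin 9 → Fin 9 → Prop)
    (S : Fin 9 → Fin 9 → Fin 9) : Prop :=
  ∀ i j d, clues i j d → S i j = d

/-- Binary encoding of a Sudoku grid: `x i j k = 1` iff `S i j = k`. -/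
def enc (S : Fin 9 → Fin 9 → Fin 9) : Fin 9 → Fin 9 → Fin 9 → ℝ :=
  fun i j k => if S i j = k then 1 else 0

/-- `‖x‖₀`: the number of nonzero coordinates of `x`. -/
noncomputable def card0 (x : Fin 9 → Fin 9 → Fin 9 → ℝ) : ℕ :=
  (Finset.univ.filter
    (fun c : Fin 9 × Fin 9 × Fin 9 => x c.1 c.2.1 c.2.2 ≠ 0)).card

lemma card0_eq_sum (y : Fin 9 → Fin 9 → Fin 9 → ℝ) :
    card0 y = ∑ i, ∑ j, (Finset.univ.filter (fun k => y i j k ≠ 0)).card := by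
  simp only [card0, Finset.card_filter, Fintype.sum_prod_type]

lemma cell_ge_one (y : Fin 9 → Fin 9 → Fin 9 → ℝ) (i j : Fin 9)
    (hsum : ∑ k, y i j k = 1) :
    1 ≤ (Finset.univ.filter (fun k => y i j k ≠ 0)).card := by
  rw [Finset.one_le_card]
  have : ∃ k, y i j k ≠ 0 := by
    by_contra h
    push_neg at h
    rw [Finset.sum_congr rfl (fun k _ => h k)] at hsum
    simp at hsum
  obtain ⟨k, hk⟩ := this
  exact ⟨k, Finset.mem_filter.mpr ⟨Finset.mem_univ k, hk⟩⟩

lemma cell_eq_one (x : Fin 9 → Fin 9 → Fin 9 → ℝ) (hbin : Binary x) (i j : Fin 9)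
    (hsum : ∑ k, x i j k = 1) :
    (Finset.univ.filter (fun k => x i j k ≠ 0)).card = 1 := by
  refine le_antisymm ?_ (cell_ge_one x i j hsum)
  by_contra h
  push_neg at h
  rw [Finset.one_lt_card] at h
  obtain ⟨a, ha, b, hb, hab⟩ := h
  simp only [Finset.mem_filter, Finset.mem_univ, true_and] at ha hb
  have ha1 : x i j a = 1 := (hbin i j a).resolve_left ha
  have hb1 : x i j b = 1 := (hbin i j b).resolve_left hb
  have hnn : ∀ k ∈ Finset.univ \ ({a, b} : Finset (Fin 9)), 0 ≤ x i j k := by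
    intro k _
    rcases hbin i j k with h | h <;> simp [h]
  have hle : ∑ k ∈ ({a, b} : Finset (Fin 9)), x i j k ≤ ∑ k, x i j k :=
    Finset.sum_le_sum_of_subset_of_nonneg (Finset.subset_univ _)
      (fun k hk hk2 => hnn k (Finset.mem_sdiff.mpr ⟨hk, hk2⟩))
  rw [Finset.sum_pair hab, ha1, hb1, hsum] at hle
  norm_num at hle

/-- Among all nonnegative solutions of the Sudoku linear system, every binary
solution minimizes `‖·‖₀`, with minimum value 81. -/
theorem binary_solution_minimizes_l0 (clues : Fin 9 → Fin 9 → Fin 9 → Prop)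
    (x : Fin 9 → Fin 9 → Fin 9 → ℝ) (hbin : Binary x) (hx : SudokuSat clues x) :
    card0 x = 81 ∧
    ∀ y : Fin 9 → Fin 9 → Fin 9 → ℝ, (∀ i j k, 0 ≤ y i j k) →
      SudokuSat clues y → card0 x ≤ card0 y := by
  obtain ⟨_, _, _, hcell, _⟩ := hx
  have hx81 : card0 x = 81 := by
    rw [card0_eq_sum]
    rw [Finset.sum_congr rfl (fun i _ => Finset.sum_congr rfl
      (fun j _ => cell_eq_one x hbin i j (hcell i j)))]
    simp
  refine ⟨hx81, ?_⟩
  intro y hynn hy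
  obtain ⟨_, _, _, hycell, _⟩ := hy
  rw [hx81, card0_eq_sum]
  calc (81 : ℕ) = ∑ _i : Fin 9, ∑ _j : Fin 9, 1 := by simp
    _ ≤ _ := by
        refine Finset.sum_le_sum (fun i _ => Finset.sum_le_sum (fun j _ => ?_))
        exact cell_ge_one y i j (hycell i j)
end

section
/- Any two distinct binary solutions of the Sudoku system Ax = b differ in at least 6 coordinates; equivalently, the corresponding Sudoku grids differ in at least 3 cells. -/
/-- A binary function on `Fin 9` summing to 1 takes the value 1 exactly once. -/
lemma exists_unique_one (f : Fin 9 → ℝ) (hb : ∀ j, f j = 0 ∨ f j = 1)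
    (hs : ∑ j, f j = 1) : ∃! j, f j = 1 := by
  classical
  have h1 : ∑ j, f j = ∑ j, (if f j = 1 then (1:ℝ) else 0) :=
    Finset.sum_congr rfl (fun j _ => by rcases hb j with h | h <;> simp [h])
  rw [h1, Finset.sum_boole] at hs
  have hcard : (Finset.univ.filter (fun j => f j = 1)).card = 1 := by
    exact_mod_cast hs
  obtain ⟨a, ha⟩ := Finset.card_eq_one.mp hcard
  refine ⟨a, ?_, ?_⟩
  · have : a ∈ Finset.univ.filter (fun j => f j = 1) := by rw [ha]; simp
    simpa using this
  · intro b hb'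
    have : b ∈ Finset.univ.filter (fun j => f j = 1) := by simp [hb']
    rw [ha] at this; simpa using this

/-- Any two distinct binary solutions of the Sudoku system differ in at least
6 coordinates, and the corresponding grids differ in at least 3 cells. -/
theorem binary_solutions_hamming_distance
    (clues : Fin 9 → Fin 9 → Fin 9 → Prop)
    (x y : Fin 9 → Fin 9 → Fin 9 → ℝ)
    (hx : Binary x) (hy : Binary y)
    (hxs : SudokuSat clues x) (hys : SudokuSat clues y) (hne : x ≠ y) :
    6 ≤ (Finset.univ.filter
      (fun c : Fin 9 × Fin 9 × Fin 9 => x c.1 c.2.1 c.2.2 ≠ y c.1 c.2.1 c.2.2)).card := by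
  classical
  -- decode the grids
  choose Sx hSx hSxu using fun i j => exists_unique_one (x i j) (hx i j) (hxs.2.2.2.1 i j)
  choose Sy hSy hSyu using fun i j => exists_unique_one (y i j) (hy i j) (hys.2.2.2.1 i j)
  have hxval : ∀ i j k, x i j k = if Sx i j = k then 1 else 0 := by
    intro i j k
    by_cases h : Sx i j = k
    · subst h; simp [hSx i j]
    · rcases hx i j k with h0 | h1
      · simp [h, h0]
      · exact absurd (hSxu i j k h1).symm h
  have hyval : ∀ i j k, y i j k = if Sy i j = k then 1 else 0 := by
    intro i j k
    by_cases h : Sy i j = k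
    · subst h; simp [hSy i j]
    · rcases hy i j k with h0 | h1
      · simp [h, h0]
      · exact absurd (hSyu i j k h1).symm h
  -- row and column uniqueness
  have hxrow : ∀ i k, ∃! j, x i j k = 1 := fun i k =>
    exists_unique_one (fun j => x i j k) (fun j => hx i j k) (hxs.1 i k)
  have hyrow : ∀ i k, ∃! j, y i j k = 1 := fun i k =>
    exists_unique_one (fun j => y i j k) (fun j => hy i j k) (hys.1 i k)
  have hxcol : ∀ j k, ∃! i, x i j k = 1 := fun j k =>
    exists_unique_one (fun i => x i j k) (fun i => hx i j k) (hxs.2.1 j k)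
  have hycol : ∀ j k, ∃! i, y i j k = 1 := fun j k =>
    exists_unique_one (fun i => y i j k) (fun i => hy i j k) (hys.2.1 j k)
  -- propagation along a row
  have rowprop : ∀ i j0, Sx i j0 ≠ Sy i j0 → ∃ j1, j1 ≠ j0 ∧ Sx i j1 ≠ Sy i j1 := by
    intro i j0 hne0
    obtain ⟨j1, hj1, -⟩ := hyrow i (Sx i j0)
    have hSyj1 : Sy i j1 = Sx i j0 := (hSyu i j1 _ hj1).symm
    have hj10 : j1 ≠ j0 := by
      intro h; subst h; exact hne0 hSyj1.symm
    refine ⟨j1, hj10, ?_⟩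
    intro heq
    have hx1 : x i j1 (Sx i j0) = 1 := by
      rw [hxval]; simp [heq.trans hSyj1]
    exact hj10 ((hxrow i (Sx i j0)).unique hx1 (hSx i j0))
  -- propagation along a column
  have colprop : ∀ i0 j, Sx i0 j ≠ Sy i0 j → ∃ i1, i1 ≠ i0 ∧ Sx i1 j ≠ Sy i1 j := by
    intro i0 j hne0
    obtain ⟨i1, hi1, -⟩ := hycol j (Sx i0 j)
    have hSyi1 : Sy i1 j = Sx i0 j := (hSyu i1 j _ hi1).symm
    have hi10 : i1 ≠ i0 := by
      intro h; subst h; exact hne0 hSyi1.symm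
    refine ⟨i1, hi10, ?_⟩
    intro heq
    have hx1 : x i1 j (Sx i0 j) = 1 := by
      rw [hxval]; simp [heq.trans hSyi1]
    exact hi10 ((hxcol j (Sx i0 j)).unique hx1 (hSx i0 j))
  -- the set of differing cells
  set C : Finset (Fin 9 × Fin 9) :=
    Finset.univ.filter (fun p => Sx p.1 p.2 ≠ Sy p.1 p.2) with hC
  -- some differing cell exists
  have hCne : ∃ p : Fin 9 × Fin 9, Sx p.1 p.2 ≠ Sy p.1 p.2 := by
    by_contra hall
    push_neg at hall
    apply hne
    funext i j k
    rw [hxval, hyval, hall (i, j)]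
  obtain ⟨⟨i0, j0⟩, h00⟩ := hCne
  obtain ⟨j1, hj10, h01⟩ := rowprop i0 j0 h00
  obtain ⟨i1, hi10, h10⟩ := colprop i0 j0 h00
  -- at least three differing cells
  have hC3 : 3 ≤ C.card := by
    have hsub : ({(i0, j0), (i0, j1), (i1, j0)} : Finset (Fin 9 × Fin 9)) ⊆ C := by
      intro p hp
      simp only [Finset.mem_insert, Finset.mem_singleton] at hp
      rcases hp with h | h | h <;> subst h <;> simp [hC, h00, h01, h10]
    have hcard : ({(i0, j0), (i0, j1), (i1, j0)} : Finset (Fin 9 × Fin 9)).card = 3 := by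
      have e1 : ((i0, j0) : Fin 9 × Fin 9) ≠ (i0, j1) :=
        fun h => hj10 (congrArg Prod.snd h).symm
      have e2 : ((i0, j0) : Fin 9 × Fin 9) ≠ (i1, j0) :=
        fun h => hi10 (congrArg Prod.fst h).symm
      have e3 : ((i0, j1) : Fin 9 × Fin 9) ≠ (i1, j0) :=
        fun h => hi10 (congrArg Prod.fst h).symm
      rw [Finset.card_insert_of_notMem (by simp [e1, e2]),
        Finset.card_insert_of_notMem (by simp [e3]), Finset.card_singleton]
    calc 3 = ({(i0, j0), (i0, j1), (i1, j0)} : Finset (Fin 9 × Fin 9)).card := hcard.symm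
      _ ≤ C.card := Finset.card_le_card hsub
  -- each differing cell gives two differing coordinates
  set D : Finset (Fin 9 × Fin 9 × Fin 9) :=
    Finset.univ.filter
      (fun c : Fin 9 × Fin 9 × Fin 9 => x c.1 c.2.1 c.2.2 ≠ y c.1 c.2.1 c.2.2) with hD
  set f1 : Fin 9 × Fin 9 → Fin 9 × Fin 9 × Fin 9 := fun p => (p.1, p.2, Sx p.1 p.2) with hf1
  set f2 : Fin 9 × Fin 9 → Fin 9 × Fin 9 × Fin 9 := fun p => (p.1, p.2, Sy p.1 p.2) with hf2
  have hsub : C.image f1 ∪ C.image f2 ⊆ D := by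
    intro c hc
    rcases Finset.mem_union.mp hc with h | h <;>
      obtain ⟨p, hp, rfl⟩ := Finset.mem_image.mp h <;>
      simp only [hC, Finset.mem_filter, Finset.mem_univ, true_and] at hp <;>
      simp only [hD, hf1, hf2, Finset.mem_filter, Finset.mem_univ, true_and] <;>
      rw [hxval, hyval]
    · simp [hp, Ne.symm hp]
    · simp [hp]
  have hdisj : Disjoint (C.image f1) (C.image f2) := by
    rw [Finset.disjoint_left]
    intro c h1 h2
    obtain ⟨p, hp, rfl⟩ := Finset.mem_image.mp h1
    obtain ⟨q, hq, heq⟩ := Finset.mem_image.mp h2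
    simp only [hC, Finset.mem_filter, Finset.mem_univ, true_and] at hp hq
    simp only [hf1, hf2, Prod.ext_iff] at heq
    obtain ⟨h1', h2', h3'⟩ := heq
    rw [h1', h2'] at hq h3'
    exact hq h3'.symm
  have hinj1 : Set.InjOn f1 C := by
    intro p _ q _ h
    simp only [hf1, Prod.ext_iff] at h
    exact Prod.ext h.1 h.2.1
  have hinj2 : Set.InjOn f2 C := by
    intro p _ q _ h
    simp only [hf2, Prod.ext_iff] at h
    exact Prod.ext h.1 h.2.1
  have hcard_union : (C.image f1 ∪ C.image f2).card = 2 * C.card := by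
    rw [Finset.card_union_of_disjoint hdisj, Finset.card_image_of_injOn hinj1,
      Finset.card_image_of_injOn hinj2]
    ring
  calc 6 = 2 * 3 := rfl
    _ ≤ 2 * C.card := by omega
    _ = (C.image f1 ∪ C.image f2).card := hcard_union.symm
    _ ≤ D.card := Finset.card_le_card hsub
end
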